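/- arXiv:1910.09779 — 7 statements merged into one kernel-verified Lean document; each statement's English description precedes it below -/
import Mathlib

section
/- (Variational lower bound for f-divergences, Lemma 2.1, inequality direction.) For every bounded measurable T : X → ℝ such that f*(T(x)) is finite for all x and x ↦ f*(T(x)) is Q-integrable, one has I_f(T; P, Q) = E_P[T] − E_Q[f*∘T] ≤ D_f(P‖Q). -/
open MeasureTheory

/-! Pointwise, the Fenchel–Young inequality `t u - f* t ≤ f u` (for `u ≥ 0`) applied with
`t = T x` and `u = dP/dQ x` gives `(dP/dQ) T - f* ∘ T ≤ f (dP/dQ)`; integrating against `Q` and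
rewriting `E_Q[(dP/dQ) T] = E_P[T]` yields the bound. -/

theorem integral_sub_integral_le_of_toReal_rnDeriv_mul_sub_le {X : Type*} [MeasurableSpace X]
    {P Q : Measure X} [SigmaFinite P] [P.HaveLebesgueDecomposition Q] (hPQ : P ≪ Q)
    {T g h : X → ℝ} (hT : Integrable T P) (hg : Integrable g Q) (hh : Integrable h Q)
    (hle : ∀ᵐ x ∂Q, (P.rnDeriv Q x).toReal * T x - g x ≤ h x) :
    ∫ x, T x ∂P - ∫ x, g x ∂Q ≤ ∫ x, h x ∂Q := by
  have hrT : Integrable (fun x => (P.rnDeriv Q x).toReal * T x) Q :=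
    (integrable_toReal_rnDeriv_mul_iff hPQ).mpr hT
  rw [← integral_toReal_rnDeriv_mul hPQ, ← integral_sub hrT hg]
  exact integral_mono_ae (hrT.sub hg) hh hle

theorem f_divergence_variational_lower_bound_general
    {X : Type*} [MeasurableSpace X]
    (P Q : Measure X) [IsProbabilityMeasure P] [IsProbabilityMeasure Q]
    (hPQ : P ≪ Q)
    (f fstar : ℝ → ℝ)
    (hfstar : ∀ t : ℝ, fstar t = sSup {y : ℝ | ∃ u : ℝ, 0 ≤ u ∧ y = t * u - f u})
    (hDf_fin : Integrable (fun x => f ((P.rnDeriv Q x).toReal)) Q)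
    (T : X → ℝ) (hT_meas : Measurable T) (hT_bdd : ∃ C : ℝ, ∀ x, |T x| ≤ C)
    (hfstar_fin : ∀ x, BddAbove {y : ℝ | ∃ u : ℝ, 0 ≤ u ∧ y = T x * u - f u})
    (hfstarT_int : Integrable (fun x => fstar (T x)) Q) :
    ∫ x, T x ∂P - ∫ x, fstar (T x) ∂Q ≤ ∫ x, f ((P.rnDeriv Q x).toReal) ∂Q := by
  obtain ⟨C, hC⟩ := hT_bdd
  have hT_int : Integrable T P :=
    .of_bound hT_meas.aestronglyMeasurable C
      (.of_forall fun x => (Real.norm_eq_abs (T x)).le.trans (hC x))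
  refine integral_sub_integral_le_of_toReal_rnDeriv_mul_sub_le hPQ hT_int hfstarT_int hDf_fin
    (.of_forall fun x => ?_)
  have hfenchel : T x * (P.rnDeriv Q x).toReal - f (P.rnDeriv Q x).toReal ≤ fstar (T x) :=
    hfstar (T x) ▸ le_csSup (hfstar_fin x) ⟨_, ENNReal.toReal_nonneg, rfl⟩
  linarith [mul_comm (P.rnDeriv Q x).toReal (T x)]

/-- Lemma 2.1, inequality direction: the variational objective
`I_f(T; P, Q) = E_P[T] - E_Q[f* ∘ T]` lower-bounds the f-divergence `D_f(P‖Q)`. -/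
theorem f_divergence_variational_lower_bound
    {X : Type*} [MeasurableSpace X]
    (P Q : Measure X) [IsProbabilityMeasure P] [IsProbabilityMeasure Q]
    (hPQ : P ≪ Q)
    (f f' fstar : ℝ → ℝ)
    (hf_conv : ConvexOn ℝ (Set.Ici (0 : ℝ)) f)
    (hf_diff : ∀ u ∈ Set.Ici (0 : ℝ), HasDerivWithinAt f (f' u) (Set.Ici (0 : ℝ)) u)
    (hf_one : f 1 = 0)
    (hfstar : ∀ t : ℝ, fstar t = sSup {y : ℝ | ∃ u : ℝ, 0 ≤ u ∧ y = t * u - f u})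
    (hDf_fin : Integrable (fun x => f ((P.rnDeriv Q x).toReal)) Q)
    (T : X → ℝ) (hT_meas : Measurable T) (hT_bdd : ∃ C : ℝ, ∀ x, |T x| ≤ C)
    (hfstar_fin : ∀ x, BddAbove {y : ℝ | ∃ u : ℝ, 0 ≤ u ∧ y = T x * u - f u})
    (hfstarT_int : Integrable (fun x => fstar (T x)) Q) :
    ∫ x, T x ∂P - ∫ x, fstar (T x) ∂Q ≤ ∫ x, f ((P.rnDeriv Q x).toReal) ∂Q :=
  f_divergence_variational_lower_bound_general P Q hPQ f fstar hfstar hDf_fin T hT_meas hT_bdd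
    hfstar_fin hfstarT_int
end

section
/- (Variational lower bound for f-divergences, Lemma 2.1, attainment direction.) Suppose the Radon–Nikodym derivative dP/dQ is Q-essentially bounded, and the functions x ↦ f(dP/dQ(x)) and x ↦ f*(f'(dP/dQ(x))) are Q-integrable. Then the choice T = f'∘(dP/dQ) attains the f-divergence: E_P[f'∘(dP/dQ)] − E_Q[f*∘f'∘(dP/dQ)] = D_f(P‖Q). -/
/-!
For `u ≥ 0` the tangent-line inequality of the convex function `f` at `u` says that the supremum
defining `f* (f' u)` is attained at `u`, so `f* (f' u) = u f' u - f u` (equality in Young's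
inequality). With `ρ = dP/dQ` this gives `E_P[f' ρ] = E_Q[ρ f' ρ] = E_Q[f ρ] + E_Q[f* (f' ρ)]`.
-/

open MeasureTheory Real Set

namespace ConvexOn

variable {s : Set ℝ} {f : ℝ → ℝ} {u f' : ℝ}

lemma add_deriv_mul_sub_le (hf : ConvexOn ℝ s f) (hu : u ∈ s)
    (hf' : HasDerivWithinAt f f' s u) {v : ℝ} (hv : v ∈ s) :
    f u + f' * (v - u) ≤ f v := by
  rcases lt_trichotomy u v with huv | rfl | hvu
  · have hslope := hf.le_slope_of_hasDerivWithinAt hu hv huv hf'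
    rw [slope_def_field, le_div_iff₀ (sub_pos.2 huv)] at hslope
    linarith
  · simp
  · have hslope := hf.slope_le_of_hasDerivWithinAt hv hu hvu hf'
    rw [slope_def_field, div_le_iff₀ (sub_pos.2 hvu)] at hslope
    linarith

lemma isGreatest_deriv_mul_sub (hf : ConvexOn ℝ s f) (hu : u ∈ s)
    (hf' : HasDerivWithinAt f f' s u) :
    IsGreatest {y | ∃ v ∈ s, y = f' * v - f v} (f' * u - f u) := by
  refine ⟨⟨u, hu, rfl⟩, ?_⟩
  rintro y ⟨v, hv, rfl⟩
  linarith [hf.add_deriv_mul_sub_le hu hf' hv]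

end ConvexOn

theorem f_divergence_variational_attainment_general
    {X : Type*} [MeasurableSpace X]
    (P Q : Measure X) [IsProbabilityMeasure P] [IsProbabilityMeasure Q]
    (hPQ : P ≪ Q)
    (f f' fstar : ℝ → ℝ)
    (hf_conv : ConvexOn ℝ (Set.Ici (0 : ℝ)) f)
    (hf_diff : ∀ u ∈ Set.Ici (0 : ℝ), HasDerivWithinAt f (f' u) (Set.Ici (0 : ℝ)) u)
    (hfstar : ∀ t : ℝ, fstar t = sSup {y : ℝ | ∃ u : ℝ, 0 ≤ u ∧ y = t * u - f u})
    (hf_rho_int : Integrable (fun x => f ((P.rnDeriv Q x).toReal)) Q)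
    (hfstar_f'_rho_int : Integrable (fun x => fstar (f' ((P.rnDeriv Q x).toReal))) Q) :
    ∫ x, f' ((P.rnDeriv Q x).toReal) ∂P - ∫ x, fstar (f' ((P.rnDeriv Q x).toReal)) ∂Q
      = ∫ x, f ((P.rnDeriv Q x).toReal) ∂Q := by
  have fstar_f' (u : ℝ) (hu : 0 ≤ u) : fstar (f' u) = f' u * u - f u := by
    rw [hfstar]
    exact (hf_conv.isGreatest_deriv_mul_sub hu (hf_diff u hu)).csSup_eq
  have integrand_eq : (fun x => (P.rnDeriv Q x).toReal * f' (P.rnDeriv Q x).toReal)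
      = fun x => f (P.rnDeriv Q x).toReal + fstar (f' (P.rnDeriv Q x).toReal) := by
    funext x
    rw [fstar_f' _ ENNReal.toReal_nonneg]
    ring
  rw [← integral_toReal_rnDeriv_mul hPQ, integrand_eq,
    integral_add hf_rho_int hfstar_f'_rho_int]
  ring

/-- Lemma 2.1, attainment direction: the choice `T = f' ∘ (dP/dQ)` attains the
f-divergence in the variational representation. -/
theorem f_divergence_variational_attainment
    {X : Type*} [MeasurableSpace X]
    (P Q : Measure X) [IsProbabilityMeasure P] [IsProbabilityMeasure Q]
    (hPQ : P ≪ Q)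
    (f f' fstar : ℝ → ℝ)
    (hf_conv : ConvexOn ℝ (Set.Ici (0 : ℝ)) f)
    (hf_diff : ∀ u ∈ Set.Ici (0 : ℝ), HasDerivWithinAt f (f' u) (Set.Ici (0 : ℝ)) u)
    (hf_one : f 1 = 0)
    (hfstar : ∀ t : ℝ, fstar t = sSup {y : ℝ | ∃ u : ℝ, 0 ≤ u ∧ y = t * u - f u})
    (hrho_bdd : ∃ C : ℝ, ∀ᵐ x ∂Q, (P.rnDeriv Q x).toReal ≤ C)
    (hf_rho_int : Integrable (fun x => f ((P.rnDeriv Q x).toReal)) Q)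
    (hfstar_f'_rho_int : Integrable (fun x => fstar (f' ((P.rnDeriv Q x).toReal))) Q) :
    ∫ x, f' ((P.rnDeriv Q x).toReal) ∂P - ∫ x, fstar (f' ((P.rnDeriv Q x).toReal)) ∂Q
      = ∫ x, f ((P.rnDeriv Q x).toReal) ∂Q :=
  f_divergence_variational_attainment_general P Q hPQ f f' fstar hf_conv hf_diff hfstar hf_rho_int
    hfstar_f'_rho_int
end

section
/- (Proposition 3.3.) Let R be a set of bounded measurable functions r : X → [0,∞) that contains the constant function 1. Suppose T : X → ℝ is bounded measurable with T(x) in the image of f' on [0,∞) for every x, and x ↦ f*(T(x)) is Q-integrable. Then I_f(T; P, Q) ≤ inf_{r ∈ R} ℓ_f(T, r; P, Q) ≤ I_W(T; P, Q). -/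
/-!
For `t = f' u₀` the supremum defining `f* t` is attained at `u₀`, since by convexity
`f` lies above its tangent line at `u₀`; so `t * u - f u ≤ f* t` for all `u ≥ 0` (Fenchel–Young).
Applying this pointwise with `t = T x`, `u = r x` and integrating against `Q` gives
`E_Q[r T] - E_Q[f ∘ r] ≤ E_Q[f* ∘ T]`, i.e. `I_f ≤ ℓ_f(T, r)` for every `r ∈ R`.
The upper bound is `ℓ_f(T, 1) = I_W(T)`, because `f 1 = 0`.
-/

open MeasureTheory Set

lemma ConvexOn.add_mul_sub_le_of_hasDerivWithinAt {S : Set ℝ} {f : ℝ → ℝ} {f' x y : ℝ}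
    (hf : ConvexOn ℝ S f) (hx : x ∈ S) (hy : y ∈ S) (hf' : HasDerivWithinAt f f' S x) :
    f x + f' * (y - x) ≤ f y := by
  rcases lt_trichotomy x y with hxy | rfl | hyx
  · have h := hf.le_slope_of_hasDerivWithinAt hx hy hxy hf'
    rw [slope_def_field, le_div_iff₀ (sub_pos.2 hxy)] at h
    linarith
  · simp
  · have h := hf.slope_le_of_hasDerivWithinAt hy hx hyx hf'
    rw [slope_def_field, div_le_iff₀ (sub_pos.2 hyx)] at h
    linarith

lemma ConvexOn.isGreatest_mul_sub_of_hasDerivWithinAt {S : Set ℝ} {f : ℝ → ℝ} {t u₀ : ℝ}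
    (hf : ConvexOn ℝ S f) (hu₀ : u₀ ∈ S) (hf' : HasDerivWithinAt f t S u₀) :
    IsGreatest {y | ∃ u, u ∈ S ∧ y = t * u - f u} (t * u₀ - f u₀) := by
  refine ⟨⟨u₀, hu₀, rfl⟩, ?_⟩
  rintro _ ⟨u, hu, rfl⟩
  have := hf.add_mul_sub_le_of_hasDerivWithinAt hu₀ hu hf'
  linarith

section FiniteMeasure

variable {X : Type*} [MeasurableSpace X] {μ : Measure X} [IsFiniteMeasure μ]

lemma integrable_of_measurable_of_abs_le {g : X → ℝ} (hg : Measurable g) {C : ℝ}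
    (hC : ∀ x, |g x| ≤ C) : Integrable g μ :=
  .of_bound hg.aestronglyMeasurable C (.of_forall hC)

lemma integrable_comp_of_continuousOn_Ici {r : X → ℝ} {h : ℝ → ℝ}
    (hh : ContinuousOn h (Ici 0)) (hr : Measurable r) {C : ℝ} (hC : ∀ x, |r x| ≤ C)
    (hr_nonneg : ∀ x, 0 ≤ r x) : Integrable (fun x => h (r x)) μ := by
  -- `h ∘ max · 0` is continuous on all of `ℝ` and agrees with `h` on the range of `r`.
  have hcont : Continuous fun t => h (max t 0) :=
    hh.comp_continuous (continuous_id.max continuous_const) fun t => le_max_right t 0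
  obtain ⟨M, hM⟩ :=
    isCompact_Icc.exists_bound_of_continuousOn (hcont.continuousOn (s := Icc (-C) C))
  have hr_eq : ∀ x, h (max (r x) 0) = h (r x) := fun x => by rw [max_eq_left (hr_nonneg x)]
  refine integrable_of_measurable_of_abs_le (C := M) ?_ fun x => ?_
  · simpa only [Function.comp_def, hr_eq] using hcont.measurable.comp hr
  · simpa only [Real.norm_eq_abs, hr_eq] using hM (r x) (abs_le.1 (hC x))

lemma integral_mul_sub_integral_le_integral_of_le_conj {f fstar : ℝ → ℝ}
    (hf : ContinuousOn f (Ici 0)) {T r : X → ℝ} (hT : Measurable T) {CT : ℝ}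
    (hCT : ∀ x, |T x| ≤ CT)
    (hyoung : ∀ x, ∀ u, 0 ≤ u → T x * u - f u ≤ fstar (T x))
    (hfstarT : Integrable (fun x => fstar (T x)) μ)
    (hr : Measurable r) {Cr : ℝ} (hCr : ∀ x, |r x| ≤ Cr) (hr_nonneg : ∀ x, 0 ≤ r x) :
    ∫ x, r x * T x ∂μ - ∫ x, f (r x) ∂μ ≤ ∫ x, fstar (T x) ∂μ := by
  have hrT : Integrable (fun x => r x * T x) μ :=
    integrable_of_measurable_of_abs_le (hr.mul hT) fun x => by
      rw [abs_mul]
      exact mul_le_mul (hCr x) (hCT x) (abs_nonneg _) ((abs_nonneg _).trans (hCr x))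
  have hfr : Integrable (fun x => f (r x)) μ :=
    integrable_comp_of_continuousOn_Ici hf hr hCr hr_nonneg
  rw [← integral_sub hrT hfr]
  refine integral_mono (hrT.sub hfr) hfstarT fun x => ?_
  simpa only [Pi.sub_apply, mul_comm (r x)] using hyoung x (r x) (hr_nonneg x)

end FiniteMeasure

theorem inf_ell_f_between_I_f_and_I_W_general
    {X : Type*} [MeasurableSpace X]
    (P Q : Measure X) [IsProbabilityMeasure P] [IsProbabilityMeasure Q]
    (f f' fstar : ℝ → ℝ)
    (hf_conv : ConvexOn ℝ (Set.Ici (0 : ℝ)) f)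
    (hf_diff : ∀ u ∈ Set.Ici (0 : ℝ), HasDerivWithinAt f (f' u) (Set.Ici (0 : ℝ)) u)
    (hf_one : f 1 = 0)
    (hfstar : ∀ t : ℝ, fstar t = sSup {y : ℝ | ∃ u : ℝ, 0 ≤ u ∧ y = t * u - f u})
    (R : Set (X → ℝ))
    (hR : ∀ r ∈ R, Measurable r ∧ (∃ C : ℝ, ∀ x, |r x| ≤ C) ∧ ∀ x, 0 ≤ r x)
    (hR_one : (fun _ => (1 : ℝ)) ∈ R)
    (T : X → ℝ) (hT_meas : Measurable T) (hT_bdd : ∃ C : ℝ, ∀ x, |T x| ≤ C)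
    (hT_im : ∀ x, ∃ u : ℝ, 0 ≤ u ∧ f' u = T x)
    (hfstarT_int : Integrable (fun x => fstar (T x)) Q) :
    ∫ x, T x ∂P - ∫ x, fstar (T x) ∂Q
      ≤ sInf {ℓ : ℝ | ∃ r ∈ R, ℓ = ∫ x, f (r x) ∂Q + ∫ x, T x ∂P - ∫ x, r x * T x ∂Q} ∧
    sInf {ℓ : ℝ | ∃ r ∈ R, ℓ = ∫ x, f (r x) ∂Q + ∫ x, T x ∂P - ∫ x, r x * T x ∂Q}
      ≤ ∫ x, T x ∂P - ∫ x, T x ∂Q := by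
  obtain ⟨CT, hCT⟩ := hT_bdd
  have hyoung : ∀ x, ∀ u, 0 ≤ u → T x * u - f u ≤ fstar (T x) := fun x u hu => by
    obtain ⟨u₀, hu₀, hf'u₀⟩ := hT_im x
    have hmax := hf_conv.isGreatest_mul_sub_of_hasDerivWithinAt hu₀ (hf'u₀ ▸ hf_diff u₀ hu₀)
    rw [hfstar]
    exact le_csSup hmax.bddAbove ⟨u, hu, rfl⟩
  have hlow : ∀ ℓ ∈ {ℓ : ℝ | ∃ r ∈ R, ℓ = ∫ x, f (r x) ∂Q + ∫ x, T x ∂P - ∫ x, r x * T x ∂Q},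
      ∫ x, T x ∂P - ∫ x, fstar (T x) ∂Q ≤ ℓ := by
    rintro _ ⟨r, hr, rfl⟩
    obtain ⟨hr_meas, ⟨Cr, hCr⟩, hr_nonneg⟩ := hR r hr
    have := integral_mul_sub_integral_le_integral_of_le_conj (μ := Q)
      (fun u hu => (hf_diff u hu).continuousWithinAt) hT_meas hCT hyoung hfstarT_int
      hr_meas hCr hr_nonneg
    linarith
  refine ⟨le_csInf ⟨_, _, hR_one, rfl⟩ hlow, ?_⟩
  simpa [hf_one] using csInf_le ⟨_, hlow⟩ ⟨_, hR_one, rfl⟩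

/-- Proposition 3.3: for any set `R` of bounded measurable nonnegative importance
weights containing the constant function 1,
`I_f(T; P, Q) ≤ inf_{r ∈ R} ℓ_f(T, r; P, Q) ≤ I_W(T; P, Q)`. -/
theorem inf_ell_f_between_I_f_and_I_W
    {X : Type*} [MeasurableSpace X]
    (P Q : Measure X) [IsProbabilityMeasure P] [IsProbabilityMeasure Q]
    (hPQ : P ≪ Q)
    (f f' fstar : ℝ → ℝ)
    (hf_conv : ConvexOn ℝ (Set.Ici (0 : ℝ)) f)
    (hf_diff : ∀ u ∈ Set.Ici (0 : ℝ), HasDerivWithinAt f (f' u) (Set.Ici (0 : ℝ)) u)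
    (hf_one : f 1 = 0)
    (hfstar : ∀ t : ℝ, fstar t = sSup {y : ℝ | ∃ u : ℝ, 0 ≤ u ∧ y = t * u - f u})
    (R : Set (X → ℝ))
    (hR : ∀ r ∈ R, Measurable r ∧ (∃ C : ℝ, ∀ x, |r x| ≤ C) ∧ ∀ x, 0 ≤ r x)
    (hR_one : (fun _ => (1 : ℝ)) ∈ R)
    (T : X → ℝ) (hT_meas : Measurable T) (hT_bdd : ∃ C : ℝ, ∀ x, |T x| ≤ C)
    (hT_im : ∀ x, ∃ u : ℝ, 0 ≤ u ∧ f' u = T x)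
    (hfstarT_int : Integrable (fun x => fstar (T x)) Q) :
    ∫ x, T x ∂P - ∫ x, fstar (T x) ∂Q
      ≤ sInf {ℓ : ℝ | ∃ r ∈ R, ℓ = ∫ x, f (r x) ∂Q + ∫ x, T x ∂P - ∫ x, r x * T x ∂Q} ∧
    sInf {ℓ : ℝ | ∃ r ∈ R, ℓ = ∫ x, f (r x) ∂Q + ∫ x, T x ∂P - ∫ x, r x * T x ∂Q}
      ≤ ∫ x, T x ∂P - ∫ x, T x ∂Q :=
  inf_ell_f_between_I_f_and_I_W_general P Q f f' fstar hf_conv hf_diff hf_one hfstar R hR hR_one T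
    hT_meas hT_bdd hT_im hfstarT_int
end

section
/- (Value of the KL-WGAN inner minimization.) Let f(u) = u·log u (with f(0) = 0) and let T : X → ℝ be bounded measurable. For r₀ = e^T / E_Q[e^T] one has E_Q[r₀·log r₀] − E_Q[r₀·T] = −log E_Q[e^T]; consequently inf_{r ∈ Δ(Q)} ℓ_f(T, r; P, Q) = E_P[T] − log E_Q[e^T]. -/
/-!
Integrating the Fenchel–Young inequality `u * s ≤ u * log u - u + exp s` (for `u ≥ 0`) at
`u = r x`, `s = T x - log Z`, where `Z = E_Q[e^T]`, shows that
`E_Q[r log r] - E_Q[r T] ≥ -log Z` for every probability density `r` with respect to `Q`.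
The Gibbs density `r₀ = e^T / Z` satisfies `r₀ log r₀ = r₀ T - r₀ log Z` pointwise, so it attains
this bound, and the infimum is a minimum.
-/

open MeasureTheory Real Set

theorem Real.sub_exp_le_mul_log_sub_mul {u : ℝ} (hu : 0 ≤ u) (s : ℝ) :
    u - exp s ≤ u * log u - u * s := by
  rcases hu.eq_or_lt with rfl | hu
  · simpa using (exp_pos s).le
  · have h := mul_le_mul_of_nonneg_left (add_one_le_exp (s - log u)) hu.le
    rw [exp_sub, exp_log hu, mul_div_cancel₀ _ hu.ne'] at h
    nlinarith

section

variable {X : Type*} [MeasurableSpace X] {μ : Measure X}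

theorem integral_div_integral_self {f : X → ℝ} (hf : ∫ x, f x ∂μ ≠ 0) :
    ∫ x, f x / ∫ y, f y ∂μ ∂μ = 1 := by
  rw [integral_div, div_self hf]

theorem integrable_of_abs_le [IsFiniteMeasure μ] {g : X → ℝ} {C : ℝ} (hg : Measurable g)
    (hC : ∀ x, |g x| ≤ C) : Integrable g μ :=
  .of_bound hg.aestronglyMeasurable C (ae_of_all _ hC)

theorem integrable_mul_log_of_le [IsFiniteMeasure μ] {r : X → ℝ} {D : ℝ} (hr : Measurable r)
    (hr₀ : ∀ x, 0 ≤ r x) (hD : ∀ x, r x ≤ D) : Integrable (fun x => r x * log (r x)) μ := by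
  obtain ⟨C, hC⟩ := isCompact_Icc.exists_bound_of_continuousOn
    (continuous_mul_log.continuousOn (s := Icc 0 D))
  exact integrable_of_abs_le (hr.mul (measurable_log.comp hr)) fun x => hC _ ⟨hr₀ x, hD x⟩

theorem neg_log_integral_exp_le_integral_mul_log_sub {T r : X → ℝ}
    (hZ : 0 < ∫ x, exp (T x) ∂μ) (hexp : Integrable (fun x => exp (T x)) μ)
    (hr : Integrable r μ) (hr₀ : ∀ x, 0 ≤ r x) (hr₁ : ∫ x, r x ∂μ = 1)
    (hrlog : Integrable (fun x => r x * log (r x)) μ) (hrT : Integrable (fun x => r x * T x) μ) :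
    -log (∫ x, exp (T x) ∂μ) ≤ ∫ x, r x * log (r x) ∂μ - ∫ x, r x * T x ∂μ := by
  set Z := ∫ x, exp (T x) ∂μ
  have hpt : ∀ x, r x - exp (T x) / Z ≤ r x * log (r x) - r x * T x + log Z * r x := by
    intro x
    have h := sub_exp_le_mul_log_sub_mul (hr₀ x) (T x - log Z)
    rw [exp_sub, exp_log hZ] at h
    linarith
  have hrlogT : Integrable (fun x => r x * log (r x) - r x * T x) μ := hrlog.sub hrT
  have h : ∫ x, r x - exp (T x) / Z ∂μ ≤ ∫ x, r x * log (r x) - r x * T x + log Z * r x ∂μ :=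
    integral_mono (hr.sub (hexp.div_const Z)) (hrlogT.add (hr.const_mul (log Z))) hpt
  rw [integral_sub hr (hexp.div_const Z), integral_add hrlogT (hr.const_mul _),
    integral_sub hrlog hrT, integral_const_mul, hr₁, integral_div_integral_self hZ.ne'] at h
  linarith

theorem integral_exp_div_mul_log_sub_integral_mul {T : X → ℝ} (hZ : ∫ x, exp (T x) ∂μ ≠ 0)
    (hexp : Integrable (fun x => exp (T x)) μ) (hexpT : Integrable (fun x => exp (T x) * T x) μ) :
    ∫ x, exp (T x) / (∫ y, exp (T y) ∂μ) * log (exp (T x) / ∫ y, exp (T y) ∂μ) ∂μ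
      - ∫ x, exp (T x) / (∫ y, exp (T y) ∂μ) * T x ∂μ = -log (∫ x, exp (T x) ∂μ) := by
  set Z := ∫ x, exp (T x) ∂μ
  have hpt : ∀ x, exp (T x) / Z * log (exp (T x) / Z)
      = exp (T x) / Z * T x - log Z * (exp (T x) / Z) := fun x => by
    rw [log_div (exp_ne_zero _) hZ, log_exp]
    ring
  have hr₀T : Integrable (fun x => exp (T x) / Z * T x) μ := by
    simpa only [div_mul_eq_mul_div] using hexpT.div_const Z
  rw [integral_congr_ae (ae_of_all _ hpt), integral_sub hr₀T ((hexp.div_const Z).const_mul _),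
    integral_const_mul, integral_div_integral_self hZ]
  ring

end

theorem kl_wgan_inner_value_general
    {X : Type*} [MeasurableSpace X]
    (P Q : Measure X) [IsProbabilityMeasure Q]
    (T : X → ℝ) (hT_meas : Measurable T) (hT_bdd : ∃ C : ℝ, ∀ x, |T x| ≤ C)
    (r₀ : X → ℝ) (hr₀ : r₀ = fun x => Real.exp (T x) / ∫ y, Real.exp (T y) ∂Q) :
    (∫ x, r₀ x * Real.log (r₀ x) ∂Q - ∫ x, r₀ x * T x ∂Q
      = -Real.log (∫ y, Real.exp (T y) ∂Q)) ∧
    sInf {ℓ : ℝ | ∃ r : X → ℝ, Measurable r ∧ (∃ C : ℝ, ∀ x, |r x| ≤ C) ∧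
        (∀ x, 0 ≤ r x) ∧ (∫ x, r x ∂Q = 1) ∧
        ℓ = ∫ x, r x * Real.log (r x) ∂Q + ∫ x, T x ∂P - ∫ x, r x * T x ∂Q}
      = ∫ x, T x ∂P - Real.log (∫ y, Real.exp (T y) ∂Q) := by
  obtain ⟨C, hC⟩ := hT_bdd
  have hT : Integrable T Q := integrable_of_abs_le hT_meas hC
  have hexp_le : ∀ x, |exp (T x)| ≤ exp C := fun x => by
    rw [abs_exp]
    exact exp_le_exp.2 ((le_abs_self _).trans (hC x))
  have hexp : Integrable (fun x => exp (T x)) Q := integrable_of_abs_le (by fun_prop) hexp_le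
  have hZ : 0 < ∫ x, exp (T x) ∂Q := integral_exp_pos hexp
  have hvalue := integral_exp_div_mul_log_sub_integral_mul hZ.ne' hexp
    (hT.bdd_mul (by fun_prop) (ae_of_all _ hexp_le))
  subst hr₀
  refine ⟨hvalue, IsLeast.csInf_eq ⟨⟨_, by fun_prop, ⟨exp C / ∫ x, exp (T x) ∂Q, fun x => ?_⟩,
    fun x => by positivity, integral_div_integral_self hZ.ne', by linarith⟩, ?_⟩⟩
  · rw [abs_div, abs_of_pos hZ]
    exact div_le_div_of_nonneg_right (hexp_le x) hZ.le
  rintro _ ⟨r, hr, ⟨D, hD⟩, hr₀, hr₁, rfl⟩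
  have := neg_log_integral_exp_le_integral_mul_log_sub hZ hexp (integrable_of_abs_le hr hD) hr₀
    hr₁ (integrable_mul_log_of_le hr hr₀ fun x => (le_abs_self _).trans (hD x))
    (hT.bdd_mul hr.aestronglyMeasurable (ae_of_all _ hD))
  linarith

/-- Value of the KL-WGAN inner minimization: with `f(u) = u log u` and
`r₀ = e^T / E_Q[e^T]`, one has `E_Q[r₀ log r₀] - E_Q[r₀ T] = -log E_Q[e^T]`, hence
`inf_{r ∈ Δ(Q)} ℓ_f(T, r; P, Q) = E_P[T] - log E_Q[e^T]`. -/
theorem kl_wgan_inner_value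
    {X : Type*} [MeasurableSpace X]
    (P Q : Measure X) [IsProbabilityMeasure P] [IsProbabilityMeasure Q]
    (hPQ : P ≪ Q)
    (T : X → ℝ) (hT_meas : Measurable T) (hT_bdd : ∃ C : ℝ, ∀ x, |T x| ≤ C)
    (r₀ : X → ℝ) (hr₀ : r₀ = fun x => Real.exp (T x) / ∫ y, Real.exp (T y) ∂Q) :
    (∫ x, r₀ x * Real.log (r₀ x) ∂Q - ∫ x, r₀ x * T x ∂Q
      = -Real.log (∫ y, Real.exp (T y) ∂Q)) ∧
    sInf {ℓ : ℝ | ∃ r : X → ℝ, Measurable r ∧ (∃ C : ℝ, ∀ x, |r x| ≤ C) ∧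
        (∀ x, 0 ≤ r x) ∧ (∫ x, r x ∂Q = 1) ∧
        ℓ = ∫ x, r x * Real.log (r x) ∂Q + ∫ x, T x ∂P - ∫ x, r x * T x ∂Q}
      = ∫ x, T x ∂P - Real.log (∫ y, Real.exp (T y) ∂Q) :=
  kl_wgan_inner_value_general P Q T hT_meas hT_bdd r₀ hr₀
end

section
/- (Theorem C.1, χ² case.) Let f(u) = (u − 1)². Let T : X → ℝ be bounded measurable with T(x) − E_Q[T] + 2 ≥ 0 for all x. Then r₀ = (T − E_Q[T] + 2)/2 belongs to Δ(Q) and minimizes r ↦ E_Q[(r − 1)²] − E_Q[r·T] over Δ(Q): for every r ∈ Δ(Q), E_Q[(r − 1)²] − E_Q[r·T] ≥ E_Q[(r₀ − 1)²] − E_Q[r₀·T]. -/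
open MeasureTheory Real Set

/-!
The objective `J r = E_Q[(r - 1)² - r T]` is a convex functional of `r`, and at `r₀` its
pointwise gradient `2 (r₀ - 1) - T` is the constant `-E_Q[T]`. Hence, for every `r` with the
same mass as `r₀`, `J r - J r₀ ≥ E_Q[(2 (r₀ - 1) - T) (r - r₀)] = -E_Q[T] (E_Q[r] - E_Q[r₀]) = 0`;
the defect is exactly `E_Q[(r - r₀)²]`.
-/

section ChiSquaredObjective

variable {X : Type*} [MeasurableSpace X] {μ : Measure X} [IsFiniteMeasure μ]

lemma integral_sq_sub_one_sub_integral_mul {s T : X → ℝ} (hs : MemLp s 2 μ) (hT : MemLp T 2 μ) :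
    ∫ x, (s x - 1) ^ 2 ∂μ - ∫ x, s x * T x ∂μ = ∫ x, ((s x - 1) ^ 2 - s x * T x) ∂μ :=
  (integral_sub (hs.sub (memLp_const 1)).integrable_sq (hs.integrable_mul hT)).symm

theorem integral_chiSquared_objective_le_of_gradient_eq_const {r r₀ T : X → ℝ} {c : ℝ}
    (hr : MemLp r 2 μ) (hr₀ : MemLp r₀ 2 μ) (hT : MemLp T 2 μ)
    (hgrad : ∀ᵐ x ∂μ, 2 * (r₀ x - 1) - T x = c) (hmass : ∫ x, r x ∂μ = ∫ x, r₀ x ∂μ) :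
    ∫ x, (r₀ x - 1) ^ 2 ∂μ - ∫ x, r₀ x * T x ∂μ
      ≤ ∫ x, (r x - 1) ^ 2 ∂μ - ∫ x, r x * T x ∂μ := by
  have hr_int := hr.integrable one_le_two
  have hr₀_int := hr₀.integrable one_le_two
  have hφr₀ : Integrable (fun x => (r₀ x - 1) ^ 2 - r₀ x * T x) μ :=
    (hr₀.sub (memLp_const 1)).integrable_sq.sub (hr₀.integrable_mul hT)
  have hφr : Integrable (fun x => (r x - 1) ^ 2 - r x * T x) μ :=
    (hr.sub (memLp_const 1)).integrable_sq.sub (hr.integrable_mul hT)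
  have hdiff : Integrable (fun x => c * (r x - r₀ x)) μ := (hr_int.sub hr₀_int).const_mul c
  have hconvex : ∀ᵐ x ∂μ, (r₀ x - 1) ^ 2 - r₀ x * T x + c * (r x - r₀ x)
      ≤ (r x - 1) ^ 2 - r x * T x := by
    filter_upwards [hgrad] with x hx
    rw [← hx]
    nlinarith [sq_nonneg (r x - r₀ x)]
  rw [integral_sq_sub_one_sub_integral_mul hr₀ hT, integral_sq_sub_one_sub_integral_mul hr hT]
  calc ∫ x, ((r₀ x - 1) ^ 2 - r₀ x * T x) ∂μ
      = ∫ x, ((r₀ x - 1) ^ 2 - r₀ x * T x + c * (r x - r₀ x)) ∂μ := by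
        rw [integral_add hφr₀ hdiff, integral_const_mul,
          integral_sub hr_int hr₀_int, hmass, sub_self, mul_zero, add_zero]
    _ ≤ ∫ x, ((r x - 1) ^ 2 - r x * T x) ∂μ :=
        integral_mono_ae (hφr₀.add hdiff) hφr hconvex

end ChiSquaredObjective

/-- Theorem C.1 (χ² case): for `f(u) = (u - 1)²`, if `T(x) - E_Q[T] + 2 ≥ 0` for
all `x`, then `r₀ = (T - E_Q[T] + 2)/2` belongs to `Δ(Q)` and minimizes
`r ↦ E_Q[(r - 1)²] - E_Q[r T]` over `Δ(Q)`. -/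
theorem chi_squared_wgan_optimal_ratio
    {X : Type*} [MeasurableSpace X]
    (Q : Measure X) [IsProbabilityMeasure Q]
    (T : X → ℝ) (hT_meas : Measurable T) (hT_bdd : ∃ C : ℝ, ∀ x, |T x| ≤ C)
    (hT_pos : ∀ x, 0 ≤ T x - ∫ y, T y ∂Q + 2)
    (r₀ : X → ℝ) (hr₀ : r₀ = fun x => (T x - ∫ y, T y ∂Q + 2) / 2) :
    (Measurable r₀ ∧ (∃ C : ℝ, ∀ x, |r₀ x| ≤ C) ∧ (∀ x, 0 ≤ r₀ x) ∧
      ∫ x, r₀ x ∂Q = 1) ∧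
    ∀ r : X → ℝ, Measurable r → (∃ C : ℝ, ∀ x, |r x| ≤ C) → (∀ x, 0 ≤ r x) →
      (∫ x, r x ∂Q = 1) →
      ∫ x, (r x - 1) ^ 2 ∂Q - ∫ x, r x * T x ∂Q
        ≥ ∫ x, (r₀ x - 1) ^ 2 ∂Q - ∫ x, r₀ x * T x ∂Q := by
  set m := ∫ y, T y ∂Q
  obtain ⟨C, hC⟩ := hT_bdd
  have hT_L2 : MemLp T 2 Q := .of_bound hT_meas.aestronglyMeasurable C (ae_of_all _ hC)
  have hr₀_meas : Measurable r₀ := hr₀ ▸ by fun_prop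
  have hr₀_bdd : ∀ x, |r₀ x| ≤ (C + |m| + 2) / 2 := fun x => by
    rw [hr₀, abs_le]
    constructor <;> linarith [abs_le.mp (hC x), neg_abs_le m, le_abs_self m]
  have hT_int := hT_L2.integrable one_le_two
  have hr₀_mass : ∫ x, r₀ x ∂Q = 1 := by
    rw [hr₀, integral_div,
      integral_add (f := fun x => T x - m) (hT_int.sub (integrable_const m)) (integrable_const 2),
      integral_sub hT_int (integrable_const m)]
    simp [m]
  refine ⟨⟨hr₀_meas, ⟨_, hr₀_bdd⟩, fun x => hr₀ ▸ div_nonneg (hT_pos x) zero_le_two, hr₀_mass⟩, ?_⟩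
  rintro r hr_meas ⟨D, hD⟩ - hr_mass
  exact integral_chiSquared_objective_le_of_gradient_eq_const
    (.of_bound hr_meas.aestronglyMeasurable D (ae_of_all _ hD))
    (.of_bound hr₀_meas.aestronglyMeasurable _ (ae_of_all _ hr₀_bdd)) hT_L2
    (c := -m) (ae_of_all _ fun x => by rw [hr₀]; ring) (hr_mass.trans hr₀_mass.symm)
end

section
/- (Value of the χ²-WGAN inner minimization, Appendix C.) Let f(u) = (u − 1)². Let T : X → ℝ be bounded measurable with T(x) − E_Q[T] + 2 ≥ 0 for all x, and set r₀ = (T − E_Q[T] + 2)/2. Then ℓ_f(T, r₀; P, Q) = E_P[T] − E_Q[T] − Var_Q[T]/4, where Var_Q[T] = E_Q[T²] − (E_Q[T])². -/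
/-!
Writing `r₀ = 1 + (T - E_Q[T]) / 2`, the χ² term `E_Q[(r₀ - 1)²]` is `Var_Q[T] / 4`, and
`E_Q[r₀ T] = E_Q[T] + E_Q[(T - E_Q[T]) T] / 2 = E_Q[T] + Var_Q[T] / 2`.
-/

open MeasureTheory Real Set
open ProbabilityTheory

lemma ProbabilityTheory.integral_sub_integral_mul_self {Ω : Type*} [MeasurableSpace Ω]
    {μ : Measure Ω} [IsProbabilityMeasure μ] {X : Ω → ℝ} (hX : MemLp X 2 μ) :
    ∫ ω, (X ω - μ[X]) * X ω ∂μ = Var[X; μ] := by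
  have hXX : Integrable (fun ω => X ω * X ω) μ := hX.integrable_mul hX
  simp_rw [sub_mul]
  rw [integral_sub hXX ((hX.integrable one_le_two).const_mul _), integral_const_mul,
    variance_eq_sub hX]
  simp only [Pi.pow_apply, sq]

theorem chi_squared_wgan_inner_value_general
    {X : Type*} [MeasurableSpace X]
    (P Q : Measure X) [IsProbabilityMeasure Q]
    (T : X → ℝ) (hT_meas : Measurable T) (hT_bdd : ∃ C : ℝ, ∀ x, |T x| ≤ C)
    (r₀ : X → ℝ) (hr₀ : r₀ = fun x => (T x - ∫ y, T y ∂Q + 2) / 2) :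
    ∫ x, (r₀ x - 1) ^ 2 ∂Q + ∫ x, T x ∂P - ∫ x, r₀ x * T x ∂Q
      = ∫ x, T x ∂P - ∫ x, T x ∂Q
        - (∫ x, (T x) ^ 2 ∂Q - (∫ x, T x ∂Q) ^ 2) / 4 := by
  obtain ⟨C, hC⟩ := hT_bdd
  have hT : MemLp T 2 Q := .of_bound hT_meas.aestronglyMeasurable C (ae_of_all _ hC)
  have hr₀' : r₀ = fun x => 1 + (T x - Q[T]) / 2 := by
    rw [hr₀]; ext; ring
  have h_f : ∫ x, (r₀ x - 1) ^ 2 ∂Q = Var[T; Q] / 4 := by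
    simp_rw [hr₀', add_sub_cancel_left, div_pow]
    rw [integral_div, ← variance_eq_integral hT.aemeasurable]
    norm_num
  have h_rT : ∫ x, r₀ x * T x ∂Q = Q[T] + Var[T; Q] / 2 := by
    have h_int : Integrable (fun x => (T x - Q[T]) * T x / 2) Q :=
      ((hT.sub (memLp_const _)).integrable_mul hT).div_const 2
    simp_rw [hr₀', add_mul, one_mul, div_mul_eq_mul_div]
    rw [integral_add (hT.integrable one_le_two) h_int, integral_div,
      integral_sub_integral_mul_self hT]
  have h_var : Var[T; Q] = ∫ x, T x ^ 2 ∂Q - Q[T] ^ 2 := by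
    simpa only [Pi.pow_apply] using variance_eq_sub hT
  rw [h_f, h_rT, h_var]
  ring

/-- Value of the χ²-WGAN inner minimization: for `f(u) = (u - 1)²` and
`r₀ = (T - E_Q[T] + 2)/2`, `ℓ_f(T, r₀; P, Q) = E_P[T] - E_Q[T] - Var_Q[T]/4`. -/
theorem chi_squared_wgan_inner_value
    {X : Type*} [MeasurableSpace X]
    (P Q : Measure X) [IsProbabilityMeasure P] [IsProbabilityMeasure Q]
    (hPQ : P ≪ Q)
    (T : X → ℝ) (hT_meas : Measurable T) (hT_bdd : ∃ C : ℝ, ∀ x, |T x| ≤ C)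
    (hT_pos : ∀ x, 0 ≤ T x - ∫ y, T y ∂Q + 2)
    (r₀ : X → ℝ) (hr₀ : r₀ = fun x => (T x - ∫ y, T y ∂Q + 2) / 2) :
    ∫ x, (r₀ x - 1) ^ 2 ∂Q + ∫ x, T x ∂P - ∫ x, r₀ x * T x ∂Q
      = ∫ x, T x ∂P - ∫ x, T x ∂Q
        - (∫ x, (T x) ^ 2 ∂Q - (∫ x, T x ∂Q) ^ 2) / 4 :=
  chi_squared_wgan_inner_value_general P Q T hT_meas hT_bdd r₀ hr₀
end

section
/- (The f-WGAN divergence with R = Δ(Q) equals the f-divergence.) Let F be the set of bounded measurable functions T : X → ℝ such that T(x) lies in the image of f' on [0,∞) for every x and x ↦ f*(T(x)) is Q-integrable. Assume the Radon–Nikodym derivative dP/dQ is Q-essentially bounded and f∘(dP/dQ) and f*∘f'∘(dP/dQ) are Q-integrable. Then sup_{T ∈ F} inf_{r ∈ Δ(Q)} ℓ_f(T, r; P, Q) = D_f(P‖Q). -/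
open MeasureTheory Real Set

/-- The critic objective `ℓ_f(T, r; P, Q) = E_Q[f∘r] + E_P[T] - E_Q[r·T]`. -/
noncomputable def ellF {X : Type*} [MeasurableSpace X]
    (f : ℝ → ℝ) (T r : X → ℝ) (P Q : MeasureTheory.Measure X) : ℝ :=
  ∫ x, f (r x) ∂Q + ∫ x, T x ∂P - ∫ x, r x * T x ∂Q

/-- Membership in the critic family `F`: bounded measurable `T` with values in the
image of `f'` on `[0,∞)` and with `f* ∘ T` Q-integrable. -/
def memF {X : Type*} [MeasurableSpace X] (f' fstar : ℝ → ℝ)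
    (Q : MeasureTheory.Measure X) (T : X → ℝ) : Prop :=
  Measurable T ∧ (∃ C : ℝ, ∀ x, |T x| ≤ C) ∧ (∀ x, ∃ u : ℝ, 0 ≤ u ∧ f' u = T x) ∧
    MeasureTheory.Integrable (fun x => fstar (T x)) Q

/-- Membership in `Δ(Q)`: bounded measurable nonnegative `r` with `E_Q[r] = 1`. -/
def memDelta {X : Type*} [MeasurableSpace X]
    (Q : MeasureTheory.Measure X) (r : X → ℝ) : Prop :=
  Measurable r ∧ (∃ C : ℝ, ∀ x, |r x| ≤ C) ∧ (∀ x, 0 ≤ r x) ∧ ∫ x, r x ∂Q = 1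

/-! The critic `T = f' ∘ dP/dQ` attains the supremum. By the Fenchel–Young inequality
`t z - f z ≤ f*(t)`, every `ℓ_f(T, r)` is at least `E_P[T] - E_Q[f*∘T]`, with equality for
`r = dP/dQ` and `T = f' ∘ dP/dQ` (equality case `f*(f' u) = f' u · u - f u`). Since
`ℓ_f(T, dP/dQ) = D_f(P‖Q)` for every `T`, each inner infimum is at most `D_f(P‖Q)`, and it equals
`D_f(P‖Q)` at the optimal critic. The essential bound on `dP/dQ` lets a truncation of it serve as
an element of `Δ(Q)`. -/

namespace ConvexOn

variable {S : Set ℝ} {f : ℝ → ℝ} {x y f'x : ℝ}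

theorem add_mul_sub_le_of_hasDerivWithinAt_s15 (hfc : ConvexOn ℝ S f) (hx : x ∈ S) (hy : y ∈ S)
    (hf' : HasDerivWithinAt f f'x S x) : f x + f'x * (y - x) ≤ f y := by
  rcases lt_trichotomy x y with hxy | rfl | hyx
  · have hslope := hfc.le_slope_of_hasDerivWithinAt hx hy hxy hf'
    rw [slope_def_field, le_div_iff₀ (sub_pos.mpr hxy)] at hslope
    linarith
  · simp
  · have hslope := hfc.slope_le_of_hasDerivWithinAt hy hx hyx hf'
    rw [slope_def_field, div_le_iff₀ (sub_pos.mpr hyx)] at hslope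
    linarith

theorem isMaxOn_mul_sub_of_hasDerivWithinAt (hfc : ConvexOn ℝ S f) (hx : x ∈ S)
    (hf' : HasDerivWithinAt f f'x S x) : IsMaxOn (fun z => f'x * z - f z) S x :=
  isMaxOn_iff.mpr fun z hz => by linarith [hfc.add_mul_sub_le_of_hasDerivWithinAt_s15 hx hz hf']

theorem monotoneOn_of_hasDerivWithinAt {f' : ℝ → ℝ} (hfc : ConvexOn ℝ S f)
    (hf' : ∀ x ∈ S, HasDerivWithinAt f (f' x) S x) : MonotoneOn f' S := by
  intro x hx y hy hxy
  rcases hxy.eq_or_lt with rfl | hxy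
  · rfl
  exact (hfc.le_slope_of_hasDerivWithinAt hx hy hxy (hf' x hx)).trans
    (hfc.slope_le_of_hasDerivWithinAt hx hy hxy (hf' y hy))

end ConvexOn

theorem sSup_mul_sub_eq_of_isMaxOn {f : ℝ → ℝ} {t u : ℝ} (hu : 0 ≤ u)
    (hmax : IsMaxOn (fun z => t * z - f z) (Ici 0) u) :
    sSup {y : ℝ | ∃ z : ℝ, 0 ≤ z ∧ y = t * z - f z} = t * u - f u :=
  IsGreatest.csSup_eq ⟨⟨u, hu, rfl⟩, by rintro _ ⟨z, hz, rfl⟩; exact hmax hz⟩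

section Integrability

variable {X : Type*} [MeasurableSpace X] {Q : Measure X} {r : X → ℝ}

theorem integrable_comp_of_continuousOn_Ici_s15 [IsFiniteMeasure Q] {g : ℝ → ℝ}
    (hg : ContinuousOn g (Ici 0)) (hr : Measurable r) (hr0 : ∀ x, 0 ≤ r x) {C : ℝ}
    (hrC : ∀ x, r x ≤ C) : Integrable (fun x => g (r x)) Q := by
  have hg_max : Continuous fun t => g (max t 0) :=
    hg.comp_continuous (continuous_id.max continuous_const) fun t => le_max_right t 0
  obtain ⟨B, hB⟩ := isCompact_Icc.exists_bound_of_continuousOn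
    (hg.mono (Icc_subset_Ici_self : Icc 0 C ⊆ Ici 0))
  refine .of_bound ?_ B (ae_of_all _ fun x => hB _ ⟨hr0 x, hrC x⟩)
  simpa only [Function.comp_def, max_eq_left (hr0 _)] using
    (hg_max.measurable.comp hr).aestronglyMeasurable

theorem memF_comp_of_monotoneOn {f' fstar : ℝ → ℝ} (hf' : MonotoneOn f' (Ici 0))
    (hr : Measurable r) (hr0 : ∀ x, 0 ≤ r x) {C : ℝ} (hrC : ∀ x, r x ≤ C)
    (hint : Integrable (fun x => fstar (f' (r x))) Q) : memF f' fstar Q (fun x => f' (r x)) := by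
  have hmono : Monotone fun t => f' (max t 0) := fun a b hab =>
    hf' (le_max_right a 0) (le_max_right b 0) (max_le_max hab le_rfl)
  refine ⟨?_, ⟨|f' 0| + |f' C|, fun x => abs_le.mpr ⟨?_, ?_⟩⟩, fun x => ⟨r x, hr0 x, rfl⟩, hint⟩
  · simpa only [Function.comp_def, max_eq_left (hr0 _)] using hmono.measurable.comp hr
  · linarith [neg_abs_le (f' 0), abs_nonneg (f' C), hf' self_mem_Ici (hr0 x) (hr0 x)]
  · linarith [le_abs_self (f' C), abs_nonneg (f' 0), hf' (hr0 x) ((hr0 x).trans (hrC x)) (hrC x)]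

end Integrability

section RadonNikodym

variable {X : Type*} [MeasurableSpace X] {P Q : Measure X}

theorem ellF_eq_integral_of_ae_eq_rnDeriv [SigmaFinite P] [SigmaFinite Q] (hPQ : P ≪ Q)
    {r : X → ℝ} (hr : r =ᵐ[Q] fun x => (P.rnDeriv Q x).toReal) (f : ℝ → ℝ) (T : X → ℝ) :
    ellF f T r P Q = ∫ x, f (P.rnDeriv Q x).toReal ∂Q := by
  have hrT : ∫ x, r x * T x ∂Q = ∫ x, T x ∂P := by
    rw [← integral_rnDeriv_smul hPQ]
    exact integral_congr_ae (hr.mono fun x hx => by simp only [hx, smul_eq_mul])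
  have hfr : ∫ x, f (r x) ∂Q = ∫ x, f (P.rnDeriv Q x).toReal ∂Q :=
    integral_congr_ae (hr.mono fun x hx => congrArg f hx)
  rw [ellF, hrT, hfr]
  ring

theorem exists_memDelta_ae_eq_rnDeriv [IsProbabilityMeasure P] [SigmaFinite Q] (hPQ : P ≪ Q)
    (hbdd : ∃ C : ℝ, ∀ᵐ x ∂Q, (P.rnDeriv Q x).toReal ≤ C) :
    ∃ r : X → ℝ, memDelta Q r ∧ r =ᵐ[Q] fun x => (P.rnDeriv Q x).toReal := by
  obtain ⟨C, hC⟩ := hbdd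
  set ρ : X → ℝ := fun x => (P.rnDeriv Q x).toReal
  have hr0 : ∀ x, 0 ≤ min (ρ x) (max C 0) := fun x =>
    le_min ENNReal.toReal_nonneg (le_max_right _ _)
  have hrρ : (fun x => min (ρ x) (max C 0)) =ᵐ[Q] ρ :=
    hC.mono fun x hx => min_eq_left (hx.trans (le_max_left _ _))
  refine ⟨fun x => min (ρ x) (max C 0), ⟨?_, ⟨max C 0, fun x => ?_⟩, hr0, ?_⟩, hrρ⟩
  · exact (Measure.measurable_rnDeriv P Q).ennreal_toReal.min measurable_const
  · exact (abs_of_nonneg (hr0 x)).trans_le (min_le_right _ _)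
  · rw [integral_congr_ae hrρ, Measure.integral_toReal_rnDeriv hPQ, probReal_univ]

end RadonNikodym

section Conjugate

variable {X : Type*} [MeasurableSpace X] {P Q : Measure X} {f f' fstar : ℝ → ℝ} {T r : X → ℝ}
    (hf_conv : ConvexOn ℝ (Ici 0) f)
    (hf_diff : ∀ u ∈ Ici (0 : ℝ), HasDerivWithinAt f (f' u) (Ici 0) u)
    (hfstar : ∀ t : ℝ, fstar t = sSup {y : ℝ | ∃ u : ℝ, 0 ≤ u ∧ y = t * u - f u})
include hf_conv hf_diff hfstar

theorem fstar_deriv_eq {u : ℝ} (hu : 0 ≤ u) : fstar (f' u) = f' u * u - f u := by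
  rw [hfstar]
  exact sSup_mul_sub_eq_of_isMaxOn hu
    (hf_conv.isMaxOn_mul_sub_of_hasDerivWithinAt hu (hf_diff u hu))

theorem mul_sub_le_fstar {t z : ℝ} (ht : ∃ u : ℝ, 0 ≤ u ∧ f' u = t) (hz : 0 ≤ z) :
    t * z - f z ≤ fstar t := by
  obtain ⟨u, hu, rfl⟩ := ht
  rw [fstar_deriv_eq hf_conv hf_diff hfstar hu]
  exact hf_conv.isMaxOn_mul_sub_of_hasDerivWithinAt hu (hf_diff u hu) hz

theorem integral_sub_integral_fstar_le_ellF [IsFiniteMeasure Q] (hT : memF f' fstar Q T)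
    (hr : memDelta Q r) : ∫ x, T x ∂P - ∫ x, fstar (T x) ∂Q ≤ ellF f T r P Q := by
  obtain ⟨hTm, ⟨CT, hTC⟩, hT_range, hT_int⟩ := hT
  obtain ⟨hrm, ⟨Cr, hrC⟩, hr0, -⟩ := hr
  have hfr : Integrable (fun x => f (r x)) Q :=
    integrable_comp_of_continuousOn_Ici_s15 (fun u hu => (hf_diff u hu).continuousWithinAt) hrm hr0
      fun x => (le_abs_self _).trans (hrC x)
  have hrT : Integrable (fun x => r x * T x) Q :=
    (Integrable.of_bound hrm.aestronglyMeasurable Cr (ae_of_all _ hrC)).mul_bdd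
      hTm.aestronglyMeasurable (ae_of_all _ hTC)
  have hmono : ∫ x, -fstar (T x) ∂Q ≤ ∫ x, (f (r x) - r x * T x) ∂Q :=
    integral_mono hT_int.neg (hfr.sub hrT) fun x => by
      linarith [mul_sub_le_fstar hf_conv hf_diff hfstar (hT_range x) (hr0 x)]
  rw [integral_neg, integral_sub hfr hrT] at hmono
  rw [ellF]
  linarith

theorem integral_sub_integral_fstar_eq [IsFiniteMeasure P] [SigmaFinite Q] (hPQ : P ≪ Q)
    (hT : memF f' fstar Q T) (hTρ : T =ᵐ[Q] fun x => f' (P.rnDeriv Q x).toReal) :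
    ∫ x, T x ∂P - ∫ x, fstar (T x) ∂Q = ∫ x, f (P.rnDeriv Q x).toReal ∂Q := by
  obtain ⟨hTm, ⟨CT, hTC⟩, -, hT_int⟩ := hT
  have hρT : Integrable (fun x => (P.rnDeriv Q x).toReal * T x) Q :=
    Measure.integrable_toReal_rnDeriv.mul_bdd hTm.aestronglyMeasurable (ae_of_all _ hTC)
  rw [← integral_rnDeriv_smul hPQ]
  simp only [smul_eq_mul]
  rw [← integral_sub hρT hT_int]
  refine integral_congr_ae (hTρ.mono fun x hx => ?_)
  simp only [hx, fstar_deriv_eq hf_conv hf_diff hfstar ENNReal.toReal_nonneg]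
  ring

end Conjugate

theorem f_wgan_divergence_delta_eq_D_f_general
    {X : Type*} [MeasurableSpace X]
    (P Q : Measure X) [IsProbabilityMeasure P] [IsProbabilityMeasure Q]
    (hPQ : P ≪ Q)
    (f f' fstar : ℝ → ℝ)
    (hf_conv : ConvexOn ℝ (Set.Ici (0 : ℝ)) f)
    (hf_diff : ∀ u ∈ Set.Ici (0 : ℝ), HasDerivWithinAt f (f' u) (Set.Ici (0 : ℝ)) u)
    (hfstar : ∀ t : ℝ, fstar t = sSup {y : ℝ | ∃ u : ℝ, 0 ≤ u ∧ y = t * u - f u})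
    (hrho_bdd : ∃ C : ℝ, ∀ᵐ x ∂Q, (P.rnDeriv Q x).toReal ≤ C)
    (hfstar_f'_rho_int : Integrable (fun x => fstar (f' ((P.rnDeriv Q x).toReal))) Q) :
    sSup {v : ℝ | ∃ T : X → ℝ, memF f' fstar Q T ∧
        v = sInf {ℓ : ℝ | ∃ r : X → ℝ, memDelta Q r ∧ ℓ = ellF f T r P Q}}
      = ∫ x, f ((P.rnDeriv Q x).toReal) ∂Q := by
  obtain ⟨r₀, hr₀, hr₀ρ⟩ := exists_memDelta_ae_eq_rnDeriv hPQ hrho_bdd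
  have hval (T : X → ℝ) := ellF_eq_integral_of_ae_eq_rnDeriv hPQ hr₀ρ f T
  have ⟨hr₀m, ⟨C, hr₀C⟩, hr₀0, _⟩ := hr₀
  have hT₀ : memF f' fstar Q fun x => f' (r₀ x) :=
    memF_comp_of_monotoneOn (hf_conv.monotoneOn_of_hasDerivWithinAt hf_diff) hr₀m hr₀0
      (fun x => (le_abs_self _).trans (hr₀C x))
      (hfstar_f'_rho_int.congr (hr₀ρ.mono fun x hx => by simp only [hx]))
  have hT₀ρ : (fun x => f' (r₀ x)) =ᵐ[Q] fun x => f' (P.rnDeriv Q x).toReal :=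
    hr₀ρ.mono fun x hx => by simp only [hx]
  have hleast : IsLeast {ℓ | ∃ r, memDelta Q r ∧ ℓ = ellF f (fun x => f' (r₀ x)) r P Q}
      (∫ x, f (P.rnDeriv Q x).toReal ∂Q) := by
    refine ⟨⟨r₀, hr₀, (hval _).symm⟩, ?_⟩
    rintro _ ⟨r, hr, rfl⟩
    rw [← integral_sub_integral_fstar_eq hf_conv hf_diff hfstar hPQ hT₀ hT₀ρ]
    exact integral_sub_integral_fstar_le_ellF hf_conv hf_diff hfstar hT₀ hr
  refine IsGreatest.csSup_eq ⟨⟨_, hT₀, hleast.csInf_eq.symm⟩, ?_⟩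
  rintro _ ⟨T, hT, rfl⟩
  refine csInf_le ⟨∫ x, T x ∂P - ∫ x, fstar (T x) ∂Q, ?_⟩ ⟨r₀, hr₀, (hval T).symm⟩
  rintro _ ⟨r, hr, rfl⟩
  exact integral_sub_integral_fstar_le_ellF hf_conv hf_diff hfstar hT hr

/-- The f-WGAN divergence with `R = Δ(Q)` equals the f-divergence:
`sup_{T ∈ F} inf_{r ∈ Δ(Q)} ℓ_f(T, r; P, Q) = D_f(P‖Q)`. -/
theorem f_wgan_divergence_delta_eq_D_f
    {X : Type*} [MeasurableSpace X]
    (P Q : Measure X) [IsProbabilityMeasure P] [IsProbabilityMeasure Q]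
    (hPQ : P ≪ Q)
    (f f' fstar : ℝ → ℝ)
    (hf_conv : ConvexOn ℝ (Set.Ici (0 : ℝ)) f)
    (hf_diff : ∀ u ∈ Set.Ici (0 : ℝ), HasDerivWithinAt f (f' u) (Set.Ici (0 : ℝ)) u)
    (hf_one : f 1 = 0)
    (hfstar : ∀ t : ℝ, fstar t = sSup {y : ℝ | ∃ u : ℝ, 0 ≤ u ∧ y = t * u - f u})
    (hrho_bdd : ∃ C : ℝ, ∀ᵐ x ∂Q, (P.rnDeriv Q x).toReal ≤ C)
    (hf_rho_int : Integrable (fun x => f ((P.rnDeriv Q x).toReal)) Q)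
    (hfstar_f'_rho_int : Integrable (fun x => fstar (f' ((P.rnDeriv Q x).toReal))) Q) :
    sSup {v : ℝ | ∃ T : X → ℝ, memF f' fstar Q T ∧
        v = sInf {ℓ : ℝ | ∃ r : X → ℝ, memDelta Q r ∧ ℓ = ellF f T r P Q}}
      = ∫ x, f ((P.rnDeriv Q x).toReal) ∂Q :=
  f_wgan_divergence_delta_eq_D_f_general P Q hPQ f f' fstar hf_conv hf_diff hfstar hrho_bdd
    hfstar_f'_rho_int
end
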